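/- Let k ≥ 1, set s_γ := s_1^{2k} s_2 and w_{k,1} := ∑_{|δ|=k} s_δ s_γ s_δ^* (sum over words δ in {1,…,n} of length k). Then w_{k,1}^* w_{k,1} = 1, and for all words ν_1, ν_2 in {1,…,m}: w_{k,1}·t_{ν_1}t_{ν_2}^* = q^{−(|ν_1|−|ν_2|)(2k+1)}·t_{ν_1}t_{ν_2}^*·w_{k,1} and w_{k,1}^*·t_{ν_1}t_{ν_2}^* = q^{(|ν_1|−|ν_2|)(2k+1)}·t_{ν_1}t_{ν_2}^*·w_{k,1}^* (integer powers of q in ℂ). -/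

import Mathlib

open scoped BigOperators

noncomputable section

variable {A : Type*} [NormedRing A] [StarRing A] [CStarRing A]
  [NormedAlgebra ℂ A] [StarModule ℂ A] [CompleteSpace A]

/-- The product `s_{μ₁} ⋯ s_{μ_k}` associated to a word `μ : List (Fin n)`. -/
def wProd {n : ℕ} (s : Fin n → A) (μ : List (Fin n)) : A :=
  (μ.map s).prod

/-- The product associated to a word `μ : Fin k → Fin n`. -/
def sProd {n : ℕ} (s : Fin n → A) {k : ℕ} (μ : Fin k → Fin n) : A :=
  (List.ofFn fun i => s (μ i)).prod


lemma wProd_nil {n : ℕ} (s : Fin n → A) : wProd s [] = 1 := rfl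

lemma wProd_cons {n : ℕ} (s : Fin n → A) (a : Fin n) (l : List (Fin n)) :
    wProd s (a :: l) = s a * wProd s l := by simp [wProd]

lemma sProd_zero {n : ℕ} (s : Fin n → A) (δ : Fin 0 → Fin n) : sProd s δ = 1 := by
  simp [sProd]

lemma sProd_succ {n k : ℕ} (s : Fin n → A) (δ : Fin (k+1) → Fin n) :
    sProd s δ = s (δ 0) * sProd s (fun i => δ i.succ) := by
  simp [sProd, List.ofFn_succ]

lemma iso_pow (a : A) (h : star a * a = 1) (p : ℕ) : star (a ^ p) * a ^ p = 1 := by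
  induction p with
  | zero => simp
  | succ p ih =>
      rw [pow_succ' (a := a), star_mul]
      calc star (a ^ p) * star a * (a * a ^ p)
          = star (a ^ p) * (star a * a) * a ^ p := by simp [mul_assoc]
        _ = 1 := by rw [h]; rw [mul_one]; exact ih

lemma sProd_orth {n : ℕ} (s : Fin n → A)
    (hs : ∀ i j, star (s i) * s j = if i = j then 1 else 0) :
    ∀ {k : ℕ} (δ δ' : Fin k → Fin n),
      star (sProd s δ) * sProd s δ' = if δ = δ' then 1 else 0 := by
  intro k
  induction k with
  | zero =>
      intro δ δ'
      rw [sProd_zero, sProd_zero, if_pos (Subsingleton.elim _ _)]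
      simp
  | succ k ih =>
      intro δ δ'
      rw [sProd_succ, sProd_succ, star_mul]
      have key : star (sProd s fun i => δ i.succ) * star (s (δ 0)) *
          (s (δ' 0) * sProd s fun i => δ' i.succ)
          = star (sProd s fun i => δ i.succ) * (star (s (δ 0)) * s (δ' 0)) *
            sProd s fun i => δ' i.succ := by simp [mul_assoc]
      rw [key, hs]
      by_cases h0 : δ 0 = δ' 0
      · rw [if_pos h0, mul_one, ih]
        by_cases htl : (fun i : Fin k => δ i.succ) = fun i : Fin k => δ' i.succ
        · rw [if_pos htl, if_pos]
          funext i
          refine Fin.cases h0 (fun j => ?_) i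
          exact congrFun htl j
        · rw [if_neg htl, if_neg]
          intro hh
          exact htl (funext fun i : Fin k => congrFun hh i.succ)
      · rw [if_neg h0, mul_zero, zero_mul, if_neg]
        intro hh
        exact h0 (congrFun hh 0)

lemma sProd_sum {n : ℕ} (s : Fin n → A)
    (hs1 : ∑ i : Fin n, s i * star (s i) = 1) :
    ∀ k : ℕ, ∑ δ : Fin k → Fin n, sProd s δ * star (sProd s δ) = 1 := by
  intro k
  induction k with
  | zero => simp [sProd_zero]
  | succ k ih =>
      rw [← (Fin.consEquiv (fun _ : Fin (k+1) => Fin n)).sum_comp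
        (fun δ => sProd s δ * star (sProd s δ)), Fintype.sum_prod_type]
      have : ∀ (a : Fin n) (g : Fin k → Fin n),
          sProd s ((Fin.consEquiv (fun _ : Fin (k+1) => Fin n)) (a, g)) *
            star (sProd s ((Fin.consEquiv (fun _ : Fin (k+1) => Fin n)) (a, g)))
          = s a * (sProd s g * star (sProd s g)) * star (s a) := by
        intro a g
        have h1 : sProd s ((Fin.consEquiv (fun _ : Fin (k+1) => Fin n)) (a, g)) = s a * sProd s g := by
          rw [sProd_succ]
          simp [Fin.consEquiv]
        rw [h1, star_mul]
        simp [mul_assoc]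
      simp_rw [this]
      calc ∑ a : Fin n, ∑ g : Fin k → Fin n, s a * (sProd s g * star (sProd s g)) * star (s a)
          = ∑ a : Fin n, s a * (∑ g : Fin k → Fin n, sProd s g * star (sProd s g)) * star (s a) := by
            congr 1; funext a; rw [Finset.mul_sum, Finset.sum_mul]
        _ = 1 := by rw [ih]; simpa using hs1

lemma comm_mul {a x y : A} {c d : ℂ} (hx : a * x = c • (x * a)) (hy : a * y = d • (y * a)) :
    a * (x * y) = (c * d) • (x * y * a) := by
  calc a * (x * y) = (a * x) * y := by rw [mul_assoc]
    _ = (c • (x * a)) * y := by rw [hx]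
    _ = c • (x * (a * y)) := by rw [smul_mul_assoc, mul_assoc]
    _ = c • (x * (d • (y * a))) := by rw [hy]
    _ = (c * d) • (x * y * a) := by rw [mul_smul_comm, smul_smul, mul_assoc]

lemma comm_pow {a x : A} {c : ℂ} (hx : a * x = c • (x * a)) (p : ℕ) :
    a * x ^ p = c ^ p • (x ^ p * a) := by
  induction p with
  | zero => simp
  | succ p ih =>
      rw [pow_succ, pow_succ]
      exact comm_mul ih hx

lemma comm_sProd {n : ℕ} (s : Fin n → A) {a : A} {c : ℂ}
    (h : ∀ j, a * s j = c • (s j * a)) :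
    ∀ {k : ℕ} (δ : Fin k → Fin n), a * sProd s δ = c ^ k • (sProd s δ * a) := by
  intro k
  induction k with
  | zero => intro δ; rw [sProd_zero]; simp
  | succ k ih =>
      intro δ
      rw [sProd_succ, pow_succ']
      exact comm_mul (h (δ 0)) (ih _)

lemma comm_star_sProd {n : ℕ} (s : Fin n → A) {a : A} {c : ℂ}
    (h : ∀ j, a * star (s j) = c • (star (s j) * a)) :
    ∀ {k : ℕ} (δ : Fin k → Fin n), a * star (sProd s δ) = c ^ k • (star (sProd s δ) * a) := by
  intro k
  induction k with
  | zero => intro δ; rw [sProd_zero]; simp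
  | succ k ih =>
      intro δ
      rw [sProd_succ, star_mul, pow_succ]
      exact comm_mul (ih _) (h (δ 0))

lemma comm_mul' {x u v : A} {c d : ℂ} (hu : u * x = c • (x * u)) (hv : v * x = d • (x * v)) :
    (u * v) * x = (c * d) • (x * (u * v)) := by
  calc (u * v) * x = u * (v * x) := by rw [mul_assoc]
    _ = u * (d • (x * v)) := by rw [hv]
    _ = d • ((u * x) * v) := by rw [mul_smul_comm, mul_assoc]
    _ = d • ((c • (x * u)) * v) := by rw [hu]
    _ = (c * d) • (x * (u * v)) := by
        rw [smul_mul_assoc, smul_smul, mul_assoc, mul_comm d c]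

lemma t_comm_list {m : ℕ} (t : Fin m → A) {x : A} {c : ℂ}
    (h : ∀ r, t r * x = c • (x * t r)) :
    ∀ ν : List (Fin m), wProd t ν * x = c ^ ν.length • (x * wProd t ν) := by
  intro ν
  induction ν with
  | nil => simp [wProd_nil]
  | cons a l ih =>
      rw [wProd_cons, List.length_cons, pow_succ']
      exact comm_mul' (h a) ih

lemma star_t_comm_list {m : ℕ} (t : Fin m → A) {x : A} {c : ℂ}
    (h : ∀ r, star (t r) * x = c • (x * star (t r))) :
    ∀ ν : List (Fin m), star (wProd t ν) * x = c ^ ν.length • (x * star (wProd t ν)) := by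
  intro ν
  induction ν with
  | nil => simp [wProd_nil]
  | cons a l ih =>
      rw [wProd_cons, star_mul, List.length_cons, pow_succ]
      exact comm_mul' ih (h a)

/-- `w_{k,1} := ∑_{|δ|=k} s_δ s_γ s_δ^*` (with `s_γ = s_1^{2k} s_2`)
is an isometry and commutes with `t_{ν₁} t_{ν₂}^*` up to the power
`q^{∓(|ν₁|−|ν₂|)(2k+1)}`. -/
theorem stmt15 {n m : ℕ} (hn : 2 ≤ n) (hm : 2 ≤ m) (q : ℂ) (hq : ‖q‖ = 1)
    (s : Fin n → A) (t : Fin m → A)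
    (hs : ∀ i j, star (s i) * s j = if i = j then 1 else 0)
    (hs1 : ∑ i : Fin n, s i * star (s i) = 1)
    (ht : ∀ r l, star (t r) * t l = if r = l then 1 else 0)
    (ht1 : ∑ r : Fin m, t r * star (t r) = 1)
    (hst : ∀ j r, star (s j) * t r = q • (t r * star (s j)))
    (hts : ∀ r j, t r * s j = q • (s j * t r))
    (k : ℕ) (hk : 1 ≤ k)
    (sγ : A) (hsγ : sγ = (s ⟨0, by omega⟩) ^ (2 * k) * s ⟨1, by omega⟩)
    (w : A) (hw : w = ∑ δ : Fin k → Fin n, sProd s δ * sγ * star (sProd s δ)) :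
    star w * w = 1 ∧
    (∀ ν₁ ν₂ : List (Fin m),
      w * (wProd t ν₁ * star (wProd t ν₂))
        = q ^ (-(((ν₁.length : ℤ) - (ν₂.length : ℤ)) * (2 * (k : ℤ) + 1))) •
            (wProd t ν₁ * star (wProd t ν₂) * w)) ∧
    (∀ ν₁ ν₂ : List (Fin m),
      star w * (wProd t ν₁ * star (wProd t ν₂))
        = q ^ (((ν₁.length : ℤ) - (ν₂.length : ℤ)) * (2 * (k : ℤ) + 1)) •
            (wProd t ν₁ * star (wProd t ν₂) * star w)) := by
  have hq0 : q ≠ 0 := by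
    intro h
    rw [h] at hq
    simp at hq
  have hnormSq : Complex.normSq q = 1 := by
    rw [Complex.normSq_eq_norm_sq, hq]
    norm_num
  have hmul1 : q * (starRingEnd ℂ) q = 1 := by
    rw [Complex.mul_conj, hnormSq]
    norm_num
  have hconj : (starRingEnd ℂ) q = q⁻¹ :=
    eq_inv_of_mul_eq_one_left (by rw [mul_comm]; exact hmul1)
  have hstarq : star q = q⁻¹ := hconj
  have flip : ∀ (u v : A) (d : ℂ), d ≠ 0 → u * v = d • (v * u) → v * u = d⁻¹ • (u * v) := by
    intro u v d hd h
    rw [h, smul_smul, inv_mul_cancel₀ hd, one_smul]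
  -- single-letter commutation relations
  have hA3 : ∀ r j, t r * star (s j) = q⁻¹ • (star (s j) * t r) := by
    intro r j
    exact flip _ _ q hq0 (hst j r)
  have hA2 : ∀ r j, star (t r) * s j = q⁻¹ • (s j * star (t r)) := by
    intro r j
    have h := congrArg star (hst j r)
    rw [star_mul, star_star, star_smul, star_mul, star_star, hstarq] at h
    exact h
  have hA4 : ∀ r j, star (t r) * star (s j) = q • (star (s j) * star (t r)) := by
    intro r j
    have h := congrArg star (hts r j)
    rw [star_mul, star_smul, star_mul, hstarq] at h
    -- h : star (s j) * star (t r) = q⁻¹ • (star (t r) * star (s j))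
    have := flip _ _ q⁻¹ (inv_ne_zero hq0) h
    rwa [inv_inv] at this
  -- term-level commutation
  have term_comm : ∀ (a : A) (c1 c2 : ℂ),
      (∀ j, a * s j = c1 • (s j * a)) → (∀ j, a * star (s j) = c2 • (star (s j) * a)) →
      ∀ δ : Fin k → Fin n,
        a * (sProd s δ * sγ * star (sProd s δ))
          = (c1 ^ k * (c1 ^ (2*k) * c1) * c2 ^ k) • (sProd s δ * sγ * star (sProd s δ) * a) := by
    intro a c1 c2 h1 h2 δ
    have hγ : a * sγ = (c1 ^ (2*k) * c1) • (sγ * a) := by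
      rw [hsγ]
      exact comm_mul (comm_pow (h1 _) (2*k)) (h1 _)
    exact comm_mul (comm_mul (comm_sProd s h1 δ) hγ) (comm_star_sProd s h2 δ)
  have hC₁ : q ^ k * (q ^ (2*k) * q) * (q⁻¹) ^ k = q ^ (2*k+1) := by
    rw [inv_pow]
    field_simp
    ring
  have hC₂ : (q⁻¹) ^ k * ((q⁻¹) ^ (2*k) * q⁻¹) * q ^ k = (q ^ (2*k+1))⁻¹ := by
    rw [inv_pow, inv_pow]
    field_simp
    ring
  have he0 : q ^ (2*k+1) ≠ 0 := pow_ne_zero _ hq0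
  have hwT : ∀ r, t r * w = q ^ (2*k+1) • (w * t r) := by
    intro r
    rw [hw, Finset.mul_sum, Finset.sum_mul, Finset.smul_sum, ← hC₁]
    exact Finset.sum_congr rfl fun δ _ =>
      term_comm (t r) q q⁻¹ (fun j => hts r j) (fun j => hA3 r j) δ
  have hwTs : ∀ r, star (t r) * w = (q ^ (2*k+1))⁻¹ • (w * star (t r)) := by
    intro r
    rw [hw, Finset.mul_sum, Finset.sum_mul, Finset.smul_sum, ← hC₂]
    exact Finset.sum_congr rfl fun δ _ =>
      term_comm (star (t r)) q⁻¹ q (fun j => hA2 r j) (fun j => hA4 r j) δ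
  have hstare : star (q ^ (2*k+1)) = (q ^ (2*k+1))⁻¹ := by
    rw [star_pow, hstarq, inv_pow]
  have hswT : ∀ r, t r * star w = (q ^ (2*k+1))⁻¹ • (star w * t r) := by
    intro r
    have h := congrArg star (hwTs r)
    simp only [star_mul, star_star, star_smul, star_inv₀, star_pow, hstarq, inv_pow, inv_inv] at h
    -- h : star w * t r = q^(2k+1) • (t r * star w)
    exact flip _ _ _ he0 h
  have hswTs : ∀ r, star (t r) * star w = ((q ^ (2*k+1))⁻¹)⁻¹ • (star w * star (t r)) := by
    intro r
    have h := congrArg star (hwT r)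
    simp only [star_mul, star_star, star_smul, star_pow, hstarq, inv_pow] at h
    -- h : star w * star (t r) = (q^(2k+1))⁻¹ • (star (t r) * star w)
    exact flip _ _ _ (inv_ne_zero he0) h
  -- main commutation lemma
  have main : ∀ (x : A) (d : ℂ), d ≠ 0 →
      (∀ r, t r * x = d • (x * t r)) → (∀ r, star (t r) * x = d⁻¹ • (x * star (t r))) →
      ∀ ν₁ ν₂ : List (Fin m),
        x * (wProd t ν₁ * star (wProd t ν₂))
          = (d ^ ν₁.length * (d⁻¹) ^ ν₂.length)⁻¹ • (wProd t ν₁ * star (wProd t ν₂) * x) := by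
    intro x d hd h1 h2 ν₁ ν₂
    have hT1 := t_comm_list t h1 ν₁
    have hT2 := star_t_comm_list t h2 ν₂
    have hXw := comm_mul' hT1 hT2
    exact flip _ _ _ (mul_ne_zero (pow_ne_zero _ hd) (pow_ne_zero _ (inv_ne_zero hd))) hXw
  have scal : ∀ L1 L2 : ℕ,
      ((q ^ (2*k+1)) ^ L1 * ((q ^ (2*k+1))⁻¹) ^ L2)⁻¹
        = q ^ (-(((L1 : ℤ) - (L2 : ℤ)) * (2 * (k : ℤ) + 1))) := by
    intro L1 L2
    rw [inv_pow, ← pow_mul, ← pow_mul, ← zpow_natCast q ((2*k+1)*L1),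
      ← zpow_natCast q ((2*k+1)*L2), ← zpow_neg, ← zpow_add₀ hq0, ← zpow_neg]
    congr 1
    push_cast
    ring
  have scal2 : ∀ L1 L2 : ℕ,
      (((q ^ (2*k+1))⁻¹) ^ L1 * (((q ^ (2*k+1))⁻¹)⁻¹) ^ L2)⁻¹
        = q ^ ((((L1 : ℤ) - (L2 : ℤ)) * (2 * (k : ℤ) + 1))) := by
    intro L1 L2
    rw [inv_inv, inv_pow, ← pow_mul, ← pow_mul, ← zpow_natCast q ((2*k+1)*L1),
      ← zpow_natCast q ((2*k+1)*L2), ← zpow_neg, ← zpow_add₀ hq0, ← zpow_neg]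
    congr 1
    push_cast
    ring
  -- isometry
  have hs00 : star (s ⟨0, by omega⟩) * s ⟨0, by omega⟩ = 1 := by
    rw [hs]; simp
  have hs11 : star (s ⟨1, by omega⟩) * s ⟨1, by omega⟩ = 1 := by
    rw [hs]; simp
  have hsγiso : star sγ * sγ = 1 := by
    rw [hsγ, star_mul]
    have h1 : star (s ⟨1, by omega⟩) * star ((s ⟨0, by omega⟩) ^ (2*k)) *
        ((s ⟨0, by omega⟩) ^ (2*k) * s ⟨1, by omega⟩)
        = star (s ⟨1, by omega⟩) *
          (star ((s ⟨0, by omega⟩) ^ (2*k)) * (s ⟨0, by omega⟩) ^ (2*k)) * s ⟨1, by omega⟩ := by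
      simp [mul_assoc]
    rw [h1, iso_pow _ hs00, mul_one, hs11]
  have hiso : star w * w = 1 := by
    have hterm : ∀ δ δ' : Fin k → Fin n,
        star (sProd s δ * sγ * star (sProd s δ)) * (sProd s δ' * sγ * star (sProd s δ'))
          = if δ = δ' then sProd s δ * star (sProd s δ) else 0 := by
      intro δ δ'
      rw [star_mul, star_mul, star_star]
      have h2 : sProd s δ * (star sγ * star (sProd s δ)) * (sProd s δ' * sγ * star (sProd s δ'))
          = sProd s δ * star sγ * (star (sProd s δ) * sProd s δ') * (sγ * star (sProd s δ')) := by
        simp [mul_assoc]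
      rw [h2, sProd_orth s hs δ δ']
      by_cases hdd : δ = δ'
      · rw [if_pos hdd, if_pos hdd, mul_one, hdd]
        have h3 : sProd s δ' * star sγ * (sγ * star (sProd s δ'))
            = sProd s δ' * (star sγ * sγ) * star (sProd s δ') := by simp [mul_assoc]
        rw [h3, hsγiso, mul_one]
      · rw [if_neg hdd, if_neg hdd, mul_zero, zero_mul]
    rw [hw, star_sum, Finset.sum_mul_sum]
    simp_rw [hterm]
    simp only [Finset.sum_ite_eq, Finset.mem_univ, if_true]
    exact sProd_sum s hs1 k
  refine ⟨hiso, ?_, ?_⟩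
  · intro ν₁ ν₂
    rw [main w (q ^ (2*k+1)) he0 hwT hwTs ν₁ ν₂, scal ν₁.length ν₂.length]
  · intro ν₁ ν₂
    rw [main (star w) ((q ^ (2*k+1))⁻¹) (inv_ne_zero he0) hswT hswTs ν₁ ν₂,
      scal2 ν₁.length ν₂.length]
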